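/- Let V₁ be the admissible Wilson loop diagram with propagators (1,3) and (1,5), and E_{6,R} the admissible Wilson loop diagram with propagators (1,3) and (1,4). Then B(V₁) = {12,13,14,15,16,23,24,25,26,35,36,45,46}, B(E_{6,R}) = {12,13,14,15,23,24,25,34,35,45}, and the intersection B(V₁) ∩ B(E_{6,R}) = {12,13,14,15,23,24,25,35,45} is itself a positroid of rank 2 on {1,…,6}, maximal among positroids properly contained in B(V₁) and maximal among positroids properly contained in B(E_{6,R}). Hence Σ(V₁) and Σ(E_{6,R}) share a codimension-one boundary cell. -/

import Mathlib

/-! Core combinatorial definitions for Wilson loop diagrams with 2 propagators on 6 vertices.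
Vertices and edges of the hexagon are labelled by `Fin 6` (cyclically; edge `i` joins
vertices `i` and `i+1`). -/

namespace WLD

/-- Vertices / edges of the hexagon. -/
abbrev V : Type := Fin 6

/-- The support of a propagator `p = {i, j}` (a pair of edges): `{i, i+1, j, j+1}`. -/
def supp (p : Finset V) : Finset V := p ∪ p.image (· + 1)

/-- Two propagators cross iff their edge pairs interleave in the cyclic order. -/
def Crossing (p q : Finset V) : Prop :=
  ∃ a b c d : V, a < b ∧ b < c ∧ c < d ∧
    ((p = {a, c} ∧ q = {b, d}) ∨ (p = {b, d} ∧ q = {a, c}))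

/-- A Wilson loop diagram with 2 propagators on 6 vertices: a set of two distinct
propagators, each of which is a pair of distinct edges. -/
def IsWLD (P : Finset (Finset V)) : Prop :=
  P.card = 2 ∧ ∀ p ∈ P, p.card = 2

/-- Admissibility: `|V_Q| ≥ |Q| + 3` for every nonempty subset of propagators, and
no two propagators cross. -/
def Admissible (P : Finset (Finset V)) : Prop :=
  IsWLD P ∧
  (∀ Q ⊆ P, Q.Nonempty → Q.card + 3 ≤ (Q.biUnion supp).card) ∧
  (∀ p ∈ P, ∀ q ∈ P, ¬ Crossing p q)

/-- The matrix `C(W)` associated to the (ordered) pair of propagators `(p, q)`,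
with real parameters `c` in the support entries and `0` elsewhere. -/
def Cmat (p q : Finset V) (c : Fin 2 → V → ℝ) : Matrix (Fin 2) V ℝ :=
  Matrix.of fun b a => if a ∈ supp (if b = 0 then p else q) then c b a else 0

/-- The `2×2` minor of a `2×6` matrix on columns `a`, `b`. -/
def mnr (M : Matrix (Fin 2) V ℝ) (a b : V) : ℝ := M 0 a * M 1 b - M 0 b * M 1 a

/-- The positroid `B(W)` of a Wilson loop diagram: the 2-element column sets on which
the minor of `C(W)` is not identically zero (i.e. nonzero for some parameter values). -/
def BW (P : Finset (Finset V)) : Set (Finset V) :=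
  { I | ∃ p ∈ P, ∃ q ∈ P, p ≠ q ∧ ∃ a b : V, a < b ∧ I = {a, b} ∧
        ∃ c : Fin 2 → V → ℝ, mnr (Cmat p q c) a b ≠ 0 }

/-- `M` is totally nonnegative (all `2×2` minors, in the column order, nonnegative). -/
def TNN (M : Matrix (Fin 2) V ℝ) : Prop := ∀ a b : V, a < b → 0 ≤ mnr M a b

/-- The set of nonvanishing maximal minors of `M` is exactly `B`. -/
def IsRep (B : Set (Finset V)) (M : Matrix (Fin 2) V ℝ) : Prop :=
  ∀ a b : V, a < b → (mnr M a b ≠ 0 ↔ ({a, b} : Finset V) ∈ B)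

/-- A positroid of rank 2 on the 6 columns: a nonempty collection of 2-element subsets
realizable as the set of nonvanishing maximal minors of a rank-2 totally nonnegative
real `2×6` matrix. -/
def IsPositroid (B : Set (Finset V)) : Prop :=
  B.Nonempty ∧ (∀ I ∈ B, I.card = 2) ∧
  ∃ M : Matrix (Fin 2) V ℝ, M.rank = 2 ∧ TNN M ∧ IsRep B M

/-- `B` is maximal among positroids properly contained in `B₀`. -/
def MaxProperSub (B B₀ : Set (Finset V)) : Prop :=
  IsPositroid B ∧ B ⊂ B₀ ∧
  ∀ B' : Set (Finset V), IsPositroid B' → B' ⊂ B₀ → B ⊆ B' → B' = B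

/-! ### Boundaries of Wilson loop diagrams -/

/-- The smaller endpoint (edge) of a propagator. -/
def e1 (p : Finset V) : V := p.min.untopD 0
/-- The larger endpoint (edge) of a propagator. -/
def e2 (p : Finset V) : V := p.max.unbotD 0

/-- The edge of `p` on which the support vertex `v` lies. -/
def edgeOf (p : Finset V) (v : V) : V :=
  if v = e1 p ∨ v = e1 p + 1 then e1 p else e2 p

/-- The endpoint of `p` other than `e`. -/
def oth (p : Finset V) (e : V) : V := if e1 p = e then e2 p else e1 p

/-- `p` is attached nearer to vertex `e` than `q` on the shared edge `e`
(in the non-crossing arrangement this means the other endpoint of `p` is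
counterclockwise-further from `e`). -/
def NearerE (p q : Finset V) (e : V) : Prop :=
  (oth q e - e).val < (oth p e - e).val

instance (p q : Finset V) (e : V) : Decidable (NearerE p q e) :=
  inferInstanceAs (Decidable (_ < _))

/-- The boundary move of `p` away from `v` collides with the other propagator `q`
(both end on the edge of `p` containing `v`, and `q`'s endpoint is in the way). -/
def IsCollision (p q : Finset V) (v : V) : Prop :=
  edgeOf p v ∈ q ∧
    ((v = edgeOf p v ∧ NearerE p q (edgeOf p v)) ∨
     (v = edgeOf p v + 1 ∧ NearerE q p (edgeOf p v)))

instance (p q : Finset V) (v : V) : Decidable (IsCollision p q v) :=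
  inferInstanceAs (Decidable (_ ∧ _))

/-- The other propagator of a two-propagator diagram. -/
noncomputable def otherProp (P : Finset (Finset V)) (p : Finset V) : Finset V :=
  if h : ∃ q, q ∈ P ∧ q ≠ p then h.choose else ∅

/-- The boundary `∂_{p,v}` of the diagram `{p, q}` is degenerate: this happens in the
vertex-removal case when the resulting diagram violates the support inequality. -/
def DegenerateB (p q : Finset V) (v : V) : Prop :=
  ¬ IsCollision p q v ∧ (((supp p).erase v) ∪ supp q).card < 5

/-- Degeneracy of the boundary `∂_{p,v}` of the diagram `P`. -/
def Degenerate (P : Finset (Finset V)) (p : Finset V) (v : V) : Prop :=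
  DegenerateB p (otherProp P p) v

/-- The positroid of the parameter family of matrices with supports given by `(p, q)`
subject to the constraint `cond`. -/
def BofFam (p q : Finset V) (cond : (Fin 2 → V → ℝ) → Prop) : Set (Finset V) :=
  { I | ∃ a b : V, a < b ∧ I = {a, b} ∧
        ∃ c : Fin 2 → V → ℝ, cond c ∧ mnr (Cmat p q c) a b ≠ 0 }

/-- The boundary positroid `B(∂_{p,v}W)` for the diagram `{p, q}`: in the collision
case the `2×2` minor on the columns of the shared edge is set to zero; in the
vertex-removal case the entry of `p` in column `v` is set to zero. -/
def BofBd (p q : Finset V) (v : V) : Set (Finset V) :=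
  BofFam p q fun c =>
    if IsCollision p q v then mnr (Cmat p q c) (edgeOf p v) (edgeOf p v + 1) = 0
    else c 0 v = 0

/-- The boundary positroid `B(∂_{p,v}W)` of the diagram `P` at `(p, v)`. -/
noncomputable def BofB (P : Finset (Finset V)) (p : Finset V) (v : V) : Set (Finset V) :=
  BofBd p (otherProp P p) v

end WLD


namespace WLD

/-- `V₁`: propagators `(1,3)` and `(1,5)` (labels shifted down by one: `{0,2}`, `{0,4}`). -/
def V1 : Finset (Finset V) := {{0, 2}, {0, 4}}

/-- `E_{6,R}`: propagators `(1,3)` and `(1,4)` (labels shifted down by one). -/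
def E6R : Finset (Finset V) := {{0, 2}, {0, 3}}

end WLD

/-! Each row of `C(W)` is supported on one propagator, so a minor is generically nonzero exactly
when its two columns can be matched to the two supports; this computes `B(V₁)` and `B(E_{6,R})`.
Their intersection is realized by an explicit totally nonnegative integer matrix. It misses a
single basis of `B(E_{6,R})`, and it misses the four bases `x5` of `B(V₁)`, which are all present or
all absent in any positroid in between, by the three-term Plücker relation, since `45` is not a
basis of `B(V₁)`. -/

theorem Matrix.rank_eq_card_of_submatrix_eq_one {m n R : Type*} [Fintype m] [DecidableEq m]
    [Fintype n] [CommRing R] [StrongRankCondition R] {M : Matrix m n R} (c : m → n)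
    (h : M.submatrix id c = 1) : M.rank = Fintype.card m :=
  le_antisymm M.rank_le_card_height (by simpa [h, Matrix.rank_one] using M.rank_submatrix_le id c)

namespace WLD

theorem mnr_swap (M : Matrix (Fin 2) V ℝ) (a b : V) : mnr M b a = -mnr M a b := by
  simp only [mnr]; ring

theorem mnr_plucker (M : Matrix (Fin 2) V ℝ) (a b c d : V) :
    mnr M a c * mnr M b d = mnr M a b * mnr M c d + mnr M a d * mnr M b c := by
  simp only [mnr]; ring

theorem mnr_ne_zero_iff_of_mnr_eq_zero {M : Matrix (Fin 2) V ℝ} {w x u v : V}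
    (huv : mnr M u v = 0) (hwu : mnr M w u ≠ 0) (hxu : mnr M x u ≠ 0) :
    mnr M x v ≠ 0 ↔ mnr M w v ≠ 0 := by
  have h := mnr_plucker M w x u v
  rw [huv, mul_zero, zero_add] at h
  constructor
  · intro hxv hwv
    exact mul_ne_zero hwu hxv (by rw [h, hwv, zero_mul])
  · intro hwv hxv
    exact mul_ne_zero hwv hxu (by rw [← h, hxv, mul_zero])

theorem mnr_map_intCast (A : Matrix (Fin 2) V ℤ) (a b : V) :
    mnr (A.map (Int.cast : ℤ → ℝ)) a b = ((A 0 a * A 1 b - A 0 b * A 1 a : ℤ) : ℝ) := by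
  simp only [mnr, Matrix.map_apply]; push_cast; rfl

section DiagramPositroid

variable {p q : Finset V}

theorem mem_supp_of_Cmat_ne_zero {c : Fin 2 → V → ℝ} {r : Fin 2} {x : V}
    (h : Cmat p q c r x ≠ 0) : x ∈ supp (if r = 0 then p else q) := by
  by_contra hx
  exact h (by simp [Cmat, hx])

def unitParams (a b : V) : Fin 2 → V → ℝ := fun r x => if x = ![a, b] r then 1 else 0

theorem mnr_Cmat_unitParams {a b : V} (hab : a ≠ b) (ha : a ∈ supp p) (hb : b ∈ supp q) :
    mnr (Cmat p q (unitParams a b)) a b = 1 := by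
  simp [mnr, Cmat, unitParams, ha, hb, hab, hab.symm]

theorem exists_mnr_Cmat_ne_zero_iff {a b : V} (hab : a ≠ b) :
    (∃ c, mnr (Cmat p q c) a b ≠ 0) ↔
      (a ∈ supp p ∧ b ∈ supp q) ∨ (a ∈ supp q ∧ b ∈ supp p) := by
  constructor
  · rintro ⟨c, hc⟩
    have hrow0 {x : V} (h : Cmat p q c 0 x ≠ 0) : x ∈ supp p := mem_supp_of_Cmat_ne_zero h
    have hrow1 {x : V} (h : Cmat p q c 1 x ≠ 0) : x ∈ supp q := mem_supp_of_Cmat_ne_zero h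
    by_cases h : Cmat p q c 0 a * Cmat p q c 1 b = 0
    · have h' : Cmat p q c 0 b * Cmat p q c 1 a ≠ 0 := fun h' => hc (by rw [mnr, h, h', sub_zero])
      exact Or.inr ⟨hrow1 (right_ne_zero_of_mul h'), hrow0 (left_ne_zero_of_mul h')⟩
    · exact Or.inl ⟨hrow0 (left_ne_zero_of_mul h), hrow1 (right_ne_zero_of_mul h)⟩
  · rintro (⟨ha, hb⟩ | ⟨ha, hb⟩)
    · exact ⟨unitParams a b, by rw [mnr_Cmat_unitParams hab ha hb]; exact one_ne_zero⟩
    · exact ⟨unitParams b a, by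
        rw [mnr_swap, mnr_Cmat_unitParams hab.symm hb ha]; exact neg_ne_zero.mpr one_ne_zero⟩

theorem mem_BW_pair (hpq : p ≠ q) (I : Finset V) :
    I ∈ BW {p, q} ↔ ∃ a b : V, a < b ∧ I = {a, b} ∧
      ((a ∈ supp p ∧ b ∈ supp q) ∨ (a ∈ supp q ∧ b ∈ supp p)) := by
  simp only [BW, Finset.mem_insert, Finset.mem_singleton]
  constructor
  · rintro ⟨p', hp', q', hq', hne, a, b, hab, rfl, hc⟩
    refine ⟨a, b, hab, rfl, ?_⟩
    rcases hp' with rfl | rfl <;> rcases hq' with rfl | rfl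
    all_goals first
      | exact absurd rfl hne
      | exact (exists_mnr_Cmat_ne_zero_iff hab.ne).mp hc
      | exact ((exists_mnr_Cmat_ne_zero_iff hab.ne).mp hc).symm
  · rintro ⟨a, b, hab, rfl, hsupp⟩
    exact ⟨p, .inl rfl, q, .inr rfl, hpq, a, b, hab, rfl,
      (exists_mnr_Cmat_ne_zero_iff hab.ne).mpr hsupp⟩

end DiagramPositroid

def bV1 : Finset (Finset V) :=
  {{0,1},{0,2},{0,3},{0,4},{0,5},{1,2},{1,3},{1,4},{1,5},{2,4},{2,5},{3,4},{3,5}}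

def bE6R : Finset (Finset V) :=
  {{0,1},{0,2},{0,3},{0,4},{1,2},{1,3},{1,4},{2,3},{2,4},{3,4}}

def bInter : Finset (Finset V) :=
  {{0,1},{0,2},{0,3},{0,4},{1,2},{1,3},{1,4},{2,4},{3,4}}

theorem BW_V1 : BW V1 = bV1 := by
  ext I
  rw [V1, mem_BW_pair (by decide), Finset.mem_coe]
  revert I
  decide

theorem BW_E6R : BW E6R = bE6R := by
  ext I
  rw [E6R, mem_BW_pair (by decide), Finset.mem_coe]
  revert I
  decide

theorem bV1_inter_bE6R : bV1 ∩ bE6R = bInter := by decide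

theorem bV1_eq_union : bV1 = bInter ∪ ({0, 1, 2, 3} : Finset V).image ({·, 5}) := by decide

theorem bE6R_eq_insert : bE6R = insert {2, 3} bInter := by decide

theorem isPositroid_of_intMatrix {B : Finset (Finset V)} (A : Matrix (Fin 2) V ℤ) (c : Fin 2 → V)
    (hc : A.submatrix id c = 1) (hcard : ∀ I ∈ B, I.card = 2) (hne : B.Nonempty)
    (hTNN : ∀ a b : V, a < b → 0 ≤ A 0 a * A 1 b - A 0 b * A 1 a)
    (hrep : ∀ a b : V, a < b → (A 0 a * A 1 b - A 0 b * A 1 a ≠ 0 ↔ {a, b} ∈ B)) :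
    IsPositroid B := by
  refine ⟨hne, hcard, A.map (Int.cast : ℤ → ℝ), ?_, fun a b hab => ?_, fun a b hab => ?_⟩
  · refine Matrix.rank_eq_card_of_submatrix_eq_one c ?_
    rw [Matrix.submatrix_map, hc, Matrix.map_one _ Int.cast_zero Int.cast_one]
  · rw [mnr_map_intCast]; exact_mod_cast hTNN a b hab
  · rw [mnr_map_intCast, Int.cast_ne_zero, Finset.mem_coe]; exact hrep a b hab

/-- Columns `0` and `4` of this matrix form the identity. -/
def interMatrix : Matrix (Fin 2) V ℤ := !![1, 1, 1, 1, 0, 0; 0, 1, 2, 2, 1, 0]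

theorem isPositroid_bInter : IsPositroid bInter :=
  isPositroid_of_intMatrix interMatrix ![0, 4] (by decide) (by decide) (by decide) (by decide)
    (by decide)

theorem maxProperSub_of_dichotomy {B B₀ : Set (Finset V)} (hB : IsPositroid B) (hBB₀ : B ⊂ B₀)
    (h : ∀ B', IsPositroid B' → B' ⊆ B₀ → B ⊆ B' → B₀ ⊆ B' ∨ B' ⊆ B) :
    MaxProperSub B B₀ := by
  refine ⟨hB, hBB₀, fun B' hB' hB'B₀ hBB' => ?_⟩
  rcases h B' hB' hB'B₀.subset hBB' with hB₀B' | hB'B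
  · exact absurd (hB'B₀.subset.antisymm hB₀B') hB'B₀.ne
  · exact hB'B.antisymm hBB'

theorem maxProperSub_insert {B : Set (Finset V)} {I : Finset V} (hB : IsPositroid B)
    (hI : I ∉ B) : MaxProperSub B (insert I B) := by
  refine maxProperSub_of_dichotomy hB (Set.ssubset_insert hI) fun B' _ hB'I hBB' => ?_
  by_cases hIB' : I ∈ B'
  · exact .inl (Set.insert_subset hIB' hBB')
  · exact .inr fun J hJ => (hB'I hJ).resolve_left (ne_of_mem_of_not_mem hJ hIB')

theorem IsRep.mem_iff_mem_of_notMem {B : Set (Finset V)} {M : Matrix (Fin 2) V ℝ}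
    (hM : IsRep B M) {w x u v : V} (hw : w < u) (hx : x < u) (huv : u < v)
    (hnot : {u, v} ∉ B) (hwu : {w, u} ∈ B) (hxu : {x, u} ∈ B) :
    {x, v} ∈ B ↔ {w, v} ∈ B := by
  rw [← hM x v (hx.trans huv), ← hM w v (hw.trans huv)]
  exact mnr_ne_zero_iff_of_mnr_eq_zero (not_not.mp (mt (hM u v huv).mp hnot))
    ((hM w u hw).mpr hwu) ((hM x u hx).mpr hxu)

theorem maxProperSub_bInter_bV1 : MaxProperSub bInter bV1 := by
  have hsub : (bInter : Set (Finset V)) ⊂ bV1 := by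
    rw [Finset.coe_ssubset]; decide
  refine maxProperSub_of_dichotomy isPositroid_bInter hsub fun B' ⟨_, _, M, _, _, hM⟩ hB'V1 hB' => ?_
  have hpar : ∀ x ∈ ({0, 1, 2, 3} : Finset V), ({x, 5} ∈ B' ↔ ({0, 5} : Finset V) ∈ B') := by
    have h45 : ({4, 5} : Finset V) ∉ B' := fun h => absurd (hB'V1 h) (by decide)
    intro x hx
    simp only [Finset.mem_insert, Finset.mem_singleton] at hx
    rcases hx with rfl | rfl | rfl | rfl <;>
      exact hM.mem_iff_mem_of_notMem (by decide) (by decide) (by decide) h45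
        (hB' (by decide)) (hB' (by decide))
  rw [bV1_eq_union, Finset.coe_union, Finset.coe_image] at hB'V1 ⊢
  by_cases h05 : ({0, 5} : Finset V) ∈ B'
  · exact .inl (Set.union_subset hB' (Set.image_subset_iff.mpr fun x hx => (hpar x hx).mpr h05))
  · refine .inr fun I hI => (hB'V1 hI).resolve_right ?_
    rintro ⟨x, hx, rfl⟩
    exact h05 ((hpar x hx).mp hI)

theorem maxProperSub_bInter_bE6R : MaxProperSub bInter bE6R := by
  rw [bE6R_eq_insert, Finset.coe_insert]
  exact maxProperSub_insert isPositroid_bInter (by decide)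

end WLD

open WLD in
/-- Basis labels are the paper's shifted down by one. -/
theorem statement17 :
    BW V1 = ({{0,1},{0,2},{0,3},{0,4},{0,5},{1,2},{1,3},{1,4},{1,5},{2,4},{2,5},{3,4},{3,5}}
        : Set (Finset V)) ∧
    BW E6R = ({{0,1},{0,2},{0,3},{0,4},{1,2},{1,3},{1,4},{2,3},{2,4},{3,4}}
        : Set (Finset V)) ∧
    BW V1 ∩ BW E6R = ({{0,1},{0,2},{0,3},{0,4},{1,2},{1,3},{1,4},{2,4},{3,4}}
        : Set (Finset V)) ∧
    IsPositroid (BW V1 ∩ BW E6R) ∧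
    MaxProperSub (BW V1 ∩ BW E6R) (BW V1) ∧
    MaxProperSub (BW V1 ∩ BW E6R) (BW E6R) := by
  have hinter : BW V1 ∩ BW E6R = bInter := by
    rw [BW_V1, BW_E6R, ← Finset.coe_inter, bV1_inter_bE6R]
  refine ⟨?_, ?_, ?_, ?_, ?_, ?_⟩
  · simp only [BW_V1, bV1, Finset.coe_insert, Finset.coe_singleton]
  · simp only [BW_E6R, bE6R, Finset.coe_insert, Finset.coe_singleton]
  · simp only [hinter, bInter, Finset.coe_insert, Finset.coe_singleton]
  · exact hinter ▸ isPositroid_bInter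
  · exact hinter ▸ BW_V1 ▸ maxProperSub_bInter_bV1
  · exact hinter ▸ BW_E6R ▸ maxProperSub_bInter_bE6R
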